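/- arXiv:0810.5429 — 4 statements merged into one kernel-verified Lean document; each statement's English description precedes it below -/
import Mathlib

section
/- Every σ-compact subset K of a Fréchet space Z is contained in the range of a compact continuous linear map φ : Y → Z for some Banach space Y. -/
open Set Filter Topology Pointwise
open scoped ENNReal Uniformity

set_option linter.unusedSectionVars false

section Aux

variable {Z : Type*} [AddCommGroup Z] [Module ℝ Z] [UniformSpace Z] [IsUniformAddGroup Z]
    [ContinuousSMul ℝ Z]

/-- A good antitone basis of closed balanced neighborhoods of zero with the halving property. -/
lemma exists_good_basis [FirstCountableTopology Z] :
    ∃ W : ℕ → Set Z, (∀ k, W k ∈ 𝓝 (0:Z)) ∧ (∀ k, Balanced ℝ (W k)) ∧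
      (∀ k, IsClosed (W k)) ∧ (∀ k, W (k+1) ⊆ W k) ∧ (∀ k, W (k+1) + W (k+1) ⊆ W k) ∧
      (∀ O ∈ 𝓝 (0:Z), ∃ k, W k ⊆ O) := by
  obtain ⟨u, hu⟩ := (𝓝 (0:Z)).exists_antitone_basis
  have hcb : ∀ U ∈ 𝓝 (0:Z), ∃ t : Set Z, t ∈ 𝓝 (0:Z) ∧ Balanced ℝ t ∧ IsClosed t ∧ t ⊆ U := by
    intro U hU
    rcases (nhds_basis_closed_balanced ℝ Z).mem_iff.1 hU with ⟨t, ⟨ht1, ht2, ht3⟩, ht4⟩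
    exact ⟨t, ht1, ht3, ht2, ht4⟩
  set P : Set Z → Prop := fun s => s ∈ 𝓝 (0:Z) ∧ Balanced ℝ s ∧ IsClosed s with hP
  have step : ∀ (s : {s : Set Z // P s}) (n : ℕ), ∃ t : {s : Set Z // P s},
      t.1 ⊆ s.1 ∧ t.1 + t.1 ⊆ s.1 ∧ t.1 ⊆ u n := by
    intro s n
    obtain ⟨H, hH, hHadd⟩ := exists_nhds_zero_half s.2.1
    obtain ⟨t, ht1, ht2, ht3, ht4⟩ := hcb (H ∩ u n) (inter_mem hH (hu.mem n))
    have htH : t ⊆ H := ht4.trans inter_subset_left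
    refine ⟨⟨t, ht1, ht2, ht3⟩, ?_, ?_, ht4.trans inter_subset_right⟩
    · intro v hv
      simpa using hHadd v (htH hv) 0 (mem_of_mem_nhds hH)
    · rintro _ ⟨v, hv, w, hw, rfl⟩
      exact hHadd v (htH hv) w (htH hw)
  choose σ hσ1 hσ2 hσ3 using step
  set W0 : {s : Set Z // P s} := σ ⟨Set.univ, univ_mem, balanced_univ, isClosed_univ⟩ 0 with hW0
  set Wseq : ℕ → {s : Set Z // P s} := fun n => Nat.rec W0 (fun k acc => σ acc (k+1)) n with hWseq
  have hsucc : ∀ k, Wseq (k+1) = σ (Wseq k) (k+1) := fun k => rfl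
  have hsubu : ∀ k, (Wseq k).1 ⊆ u k := by
    intro k
    cases k with
    | zero => exact hσ3 _ 0
    | succ k => rw [hsucc]; exact hσ3 _ (k+1)
  refine ⟨fun k => (Wseq k).1, fun k => (Wseq k).2.1, fun k => (Wseq k).2.2.1,
    fun k => (Wseq k).2.2.2, fun k => ?_, fun k => ?_, fun O hO => ?_⟩
  · exact hσ1 _ _
  · exact hσ2 _ _
  · rcases hu.1.mem_iff.1 hO with ⟨k, -, hk⟩
    exact ⟨k, (hsubu k).trans hk⟩

/-- Sum of elements of `W k` with indices all greater than `m` lies in `W m`. -/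
lemma chain_sum_mem (W : ℕ → Set Z) (hsub : ∀ k, W (k+1) ⊆ W k)
    (hadd : ∀ k, W (k+1) + W (k+1) ⊆ W k) (h0 : ∀ k, (0:Z) ∈ W k) :
    ∀ (t : Finset ℕ) (m : ℕ) (y : ℕ → Z), (∀ k ∈ t, m < k) → (∀ k ∈ t, y k ∈ W k) →
      (∑ k ∈ t, y k) ∈ W m := by
  classical
  have hanti : ∀ {a b : ℕ}, a ≤ b → W b ⊆ W a := by
    intro a b hab
    induction hab with
    | refl => exact subset_rfl
    | step h ih => exact (hsub _).trans ih
  intro t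
  induction t using Finset.strongInduction with
  | _ t ih =>
    intro m y hm hy
    rcases t.eq_empty_or_nonempty with rfl | hne
    · simpa using h0 m
    · set k₁ := t.min' hne with hk₁
      have hk₁t : k₁ ∈ t := t.min'_mem hne
      have hmk₁ : m < k₁ := hm _ hk₁t
      have hrest : (∑ k ∈ t.erase k₁, y k) ∈ W k₁ := by
        refine ih (t.erase k₁) (Finset.erase_ssubset hk₁t) k₁ y ?_ ?_
        · intro k hk
          exact lt_of_le_of_ne (t.min'_le k (Finset.mem_of_mem_erase hk))
            (Ne.symm (Finset.ne_of_mem_erase hk))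
        · exact fun k hk => hy k (Finset.mem_of_mem_erase hk)
      have hadd' : W k₁ + W k₁ ⊆ W (k₁ - 1) := by
        match k₁, hmk₁ with
        | (k₀+1), _ => simpa using hadd k₀
      have hW : y k₁ + ∑ k ∈ t.erase k₁, y k ∈ W (k₁ - 1) :=
        hadd' (Set.add_mem_add (hy _ hk₁t) hrest)
      rw [← Finset.add_sum_erase t y hk₁t]
      exact hanti (by omega) hW

/-- Absolutely convex combination lemma. -/
lemma absconv_sum_mem {ι : Type*} {D : Set Z} (hconv : Convex ℝ D) (hbal : Balanced ℝ D)
    (h0 : (0:Z) ∈ D) :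
    ∀ (t : Finset ι) (b : ι → ℝ) (d : ι → Z), (∀ i ∈ t, d i ∈ D) →
      (∑ i ∈ t, |b i|) ≤ 1 → (∑ i ∈ t, b i • d i) ∈ D := by
  classical
  intro t
  induction t using Finset.induction_on with
  | empty => intro b d _ _; simpa using h0
  | insert _ _ hit ih =>
    rename_i i t
    intro b d hd hb
    rw [Finset.sum_insert hit] at hb ⊢
    set β := |b i| with hβ
    have hβ0 : 0 ≤ β := abs_nonneg _
    have hrest0 : 0 ≤ ∑ k ∈ t, |b k| := Finset.sum_nonneg fun k _ => abs_nonneg _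
    have hβ1 : β ≤ 1 := by linarith
    by_cases hβeq : 1 - β = 0
    · -- all other coefficients vanish
      have hball : ∀ k ∈ t, b k = 0 := by
        intro k hk
        have : ∑ k ∈ t, |b k| ≤ 0 := by linarith
        have := le_antisymm this hrest0
        have hk0 := (Finset.sum_eq_zero_iff_of_nonneg (fun k _ => abs_nonneg (b k))).1 this k hk
        exact abs_eq_zero.1 hk0
      have hrest : ∑ k ∈ t, b k • d k = 0 := Finset.sum_eq_zero fun k hk => by
        rw [hball k hk, zero_smul]
      rw [hrest, add_zero]
      have : ‖b i‖ ≤ 1 := by rw [Real.norm_eq_abs]; exact hβ1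
      exact hbal.smul_mem this (hd i (Finset.mem_insert_self i t))
    · have hβlt : β < 1 := lt_of_le_of_ne hβ1 fun h => hβeq (by rw [h]; ring)
      have hpos : 0 < 1 - β := by linarith
      have hrestle : ∑ k ∈ t, |b k / (1 - β)| ≤ 1 := by
        have h1 : ∑ k ∈ t, |b k / (1 - β)| = ∑ k ∈ t, |b k| / (1 - β) :=
          Finset.sum_congr rfl fun k _ => by rw [abs_div, abs_of_pos hpos]
        rw [h1, ← Finset.sum_div, div_le_one hpos]
        linarith
      have hv : (∑ k ∈ t, (b k / (1 - β)) • d k) ∈ D :=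
        ih (fun k => b k / (1 - β)) d (fun k hk => hd k (Finset.mem_insert_of_mem hk)) hrestle
      have hvsum : ∑ k ∈ t, b k • d k = (1 - β) • ∑ k ∈ t, (b k / (1 - β)) • d k := by
        rw [Finset.smul_sum]
        refine Finset.sum_congr rfl fun k _ => ?_
        rw [smul_smul, mul_div_cancel₀ _ hβeq]
      -- first element
      by_cases hbi : b i = 0
      · rw [hbi, zero_smul, zero_add, hvsum]
        have : (1 - β) • (∑ k ∈ t, (b k / (1 - β)) • d k) ∈ D := by
          have h1 : ‖(1 - β)‖ ≤ 1 := by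
            rw [Real.norm_eq_abs, abs_of_pos hpos]; linarith
          exact hbal.smul_mem h1 hv
        exact this
      · have hβpos : 0 < β := abs_pos.2 hbi
        have huD : (b i / β) • d i ∈ D := by
          have : ‖b i / β‖ ≤ 1 := by
            rw [Real.norm_eq_abs, abs_div, hβ, abs_abs, div_self (abs_ne_zero.2 hbi)]
          exact hbal.smul_mem this (hd i (Finset.mem_insert_self i t))
        have heq : b i • d i = β • ((b i / β) • d i) := by
          rw [smul_smul, mul_div_cancel₀ _ (ne_of_gt hβpos)]
        rw [heq, hvsum]
        exact hconv huD hv hβ0 (le_of_lt hpos) (by ring)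

lemma absconv_sum_mem_smul {ι : Type*} {D : Set Z} (hconv : Convex ℝ D) (hbal : Balanced ℝ D)
    (h0 : (0:Z) ∈ D) (t : Finset ι) (b : ι → ℝ) (d : ι → Z) (hd : ∀ i ∈ t, d i ∈ D)
    {r : ℝ} (hr : 0 < r) (hb : (∑ i ∈ t, |b i|) ≤ r) : (∑ i ∈ t, b i • d i) ∈ r • D := by
  have hmem : (∑ i ∈ t, (b i / r) • d i) ∈ D := by
    refine absconv_sum_mem hconv hbal h0 t _ d hd ?_
    have h1 : ∑ i ∈ t, |b i / r| = ∑ i ∈ t, |b i| / r :=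
      Finset.sum_congr rfl fun k _ => by rw [abs_div, abs_of_pos hr]
    rw [h1, ← Finset.sum_div, div_le_one hr]; exact hb
  have : r • ∑ i ∈ t, (b i / r) • d i = ∑ i ∈ t, b i • d i := by
    rw [Finset.smul_sum]
    exact Finset.sum_congr rfl fun k _ => by rw [smul_smul, mul_div_cancel₀ _ (ne_of_gt hr)]
  rw [← this]
  exact Set.smul_mem_smul_set hmem

end Aux

/-- every σ-compact subset `K` of a Fréchet space `Z` is contained in the
range of a compact continuous linear map `φ : Y → Z` from some Banach space `Y`. -/
theorem sigmaCompact_subset_range_compact_map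
    {Z : Type*} [AddCommGroup Z] [Module ℝ Z] [UniformSpace Z] [IsUniformAddGroup Z]
    [ContinuousSMul ℝ Z] [LocallyConvexSpace ℝ Z] [CompleteSpace Z]
    [TopologicalSpace.MetrizableSpace Z]
    (K : Set Z) (hK : IsSigmaCompact K) :
    ∃ (Y : Type) (_ : NormedAddCommGroup Y) (_ : NormedSpace ℝ Y),
      CompleteSpace Y ∧
      ∃ φ : Y →L[ℝ] Z,
        (∃ U : Set Y, IsOpen U ∧ U.Nonempty ∧ IsCompact (closure (φ '' U))) ∧
        K ⊆ Set.range φ := by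
  classical
  obtain ⟨Kf, hKfc, hKfU⟩ := hK
  obtain ⟨W, hWmem, hWbal, hWcl, hWsub, hWadd, hWbasis⟩ := exists_good_basis (Z := Z)
  have hW0 : ∀ k, (0:Z) ∈ W k := fun k => mem_of_mem_nhds (hWmem k)
  have hWanti : ∀ {a b : ℕ}, a ≤ b → W b ⊆ W a := by
    intro a b hab
    induction hab with
    | refl => exact subset_rfl
    | step _ ih => exact (hWsub _).trans ih
  have hWneg : ∀ m (z : Z), z ∈ W m → -z ∈ W m := by
    intro m z hz
    have := hWbal m (-1) (by norm_num) (Set.smul_mem_smul_set hz)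
    simpa using this
  -- the scaled basis V
  have h4k : ∀ k : ℕ, ((4:ℝ)⁻¹ ^ k) ≠ 0 := fun k => by positivity
  set V : ℕ → Set Z := fun k => ((4:ℝ)⁻¹ ^ k) • W k with hV
  have hVcl : ∀ k, IsClosed (V k) := fun k => (hWcl k).smul_of_ne_zero (h4k k)
  have hVmem : ∀ k, V k ∈ 𝓝 (0:Z) := fun k =>
    (set_smul_mem_nhds_zero_iff (h4k k)).2 (hWmem k)
  have hVsubW : ∀ k, V k ⊆ W k := by
    rintro k _ ⟨w, hw, rfl⟩
    refine hWbal k _ ?_ (Set.smul_mem_smul_set hw)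
    rw [Real.norm_eq_abs, abs_of_pos (by positivity)]
    exact pow_le_one₀ (by norm_num) (by norm_num)
  -- totally bounded covering with centers inside
  have cover : ∀ (k : ℕ) (s : Set Z), IsCompact s →
      ∃ G : Set Z, G ⊆ s ∧ G.Finite ∧ ∀ z ∈ s, ∃ y ∈ G, z - y ∈ V (k+1) := by
    intro k s hs
    have hd : {p : Z × Z | p.1 - p.2 ∈ V (k+1)} ∈ 𝓤 Z := by
      rw [uniformity_eq_comap_nhds_zero_swapped]
      exact preimage_mem_comap (hVmem (k+1))
    obtain ⟨G, hGs, hGfin, hGcov⟩ := totallyBounded_iff_subset.1 hs.totallyBounded _ hd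
    refine ⟨G, hGs, hGfin, fun z hz => ?_⟩
    obtain ⟨y, hy, hzy⟩ := Set.mem_iUnion₂.1 (hGcov hz)
    exact ⟨y, hy, hzy⟩
  -- the recursive compact sets
  have step2 : ∀ (k : ℕ) (s : {s : Set Z // IsCompact s}),
      ∃ (s' : {s : Set Z // IsCompact s}) (G : Set Z),
        G ⊆ s.1 ∧ G.Finite ∧ (∀ z ∈ s.1, ∃ y ∈ G, z - y ∈ s'.1) ∧ s'.1 ⊆ V (k+1) := by
    intro k s
    obtain ⟨G, hGs, hGfin, hGcov⟩ := cover k s.1 s.2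
    have hcomp : IsCompact ((⋃ y ∈ G, (fun z => z - y) '' s.1) ∩ V (k+1)) := by
      refine IsCompact.inter_right ?_ (hVcl (k+1))
      exact hGfin.isCompact_biUnion fun y _ => s.2.image (continuous_id.sub continuous_const)
    refine ⟨⟨_, hcomp⟩, G, hGs, hGfin, fun z hz => ?_, Set.inter_subset_right⟩
    obtain ⟨y, hy, hzy⟩ := hGcov z hz
    exact ⟨y, hy, Set.mem_iUnion₂.2 ⟨y, hy, ⟨z, hz, rfl⟩⟩, hzy⟩
  choose σC σG h1 h2 h3 h4 using step2
  set Cs : ℕ → ℕ → {s : Set Z // IsCompact s} :=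
    fun j k => Nat.rec ⟨Kf j, hKfc j⟩ (fun k acc => σC k acc) k with hCs
  set G : ℕ → ℕ → Set Z := fun j k => σG k (Cs j k) with hG
  have hGC : ∀ j k, G j k ⊆ (Cs j k).1 := fun j k => h1 k (Cs j k)
  have hGfin : ∀ j k, (G j k).Finite := fun j k => h2 k (Cs j k)
  have hdec : ∀ j k, ∀ z ∈ (Cs j k).1, ∃ y ∈ G j k, z - y ∈ (Cs j (k+1)).1 :=
    fun j k => h3 k (Cs j k)
  have hCV : ∀ j k, (Cs j (k+1)).1 ⊆ V (k+1) := fun j k => h4 k (Cs j k)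
  -- enumeration of the finite sets G j k
  set len : ℕ → ℕ → ℕ := fun j k => ((hGfin j k).toFinset.toList).length with hlen
  set g : ℕ → ℕ → ℕ → Z := fun j k i => ((hGfin j k).toFinset.toList).getD i 0 with hg
  have hgzero : ∀ j k i, len j k ≤ i → g j k i = 0 := fun j k i h =>
    List.getD_eq_default _ _ h
  have hgmem : ∀ j k i, g j k i = 0 ∨ g j k i ∈ G j k := by
    intro j k i
    rcases lt_or_ge i (len j k) with h | h
    · right
      have hmem : ((hGfin j k).toFinset.toList).getD i 0 ∈ (hGfin j k).toFinset.toList := by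
        rw [List.getD_eq_getElem _ _ h]
        exact List.getElem_mem h
      have := Finset.mem_toList.1 hmem
      exact (Set.Finite.mem_toFinset _).1 this
    · left; exact hgzero j k i h
  have hgsurj : ∀ j k, ∀ y ∈ G j k, ∃ i, g j k i = y := by
    intro j k y hy
    have : y ∈ (hGfin j k).toFinset.toList := Finset.mem_toList.2 ((Set.Finite.mem_toFinset _).2 hy)
    obtain ⟨i, hi, hieq⟩ := List.mem_iff_getElem.1 this
    exact ⟨i, (List.getD_eq_getElem _ _ hi).trans hieq⟩
  -- the smallness lemma
  have hsmall : ∀ δ : ℝ, |δ| ≤ 1 → ∀ j k i m, m + 1 ≤ k →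
      δ • ((2:ℝ)^k • g j k i) ∈ W m := by
    intro δ hδ j k i m hmk
    rcases hgmem j k i with h0 | hGm
    · rw [h0, smul_zero, smul_zero]; exact hW0 m
    · obtain ⟨k', rfl⟩ : ∃ k', k = k' + 1 := ⟨k - 1, by omega⟩
      have hVk : g j (k'+1) i ∈ V (k'+1) := hCV j k' (hGC j (k'+1) hGm)
      obtain ⟨w, hw, hwe⟩ := hVk
      rw [← hwe, smul_smul, smul_smul]
      have hp2 : (0:ℝ) < 2 ^ (k'+1) := by positivity
      have hp4 : (0:ℝ) < (4:ℝ)⁻¹ ^ (k'+1) := by positivity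
      have h24 : (2:ℝ) ^ (k'+1) * (4:ℝ)⁻¹ ^ (k'+1) ≤ 1 := by
        rw [← mul_pow]
        have : (2:ℝ) * 4⁻¹ = 2⁻¹ := by norm_num
        rw [this]
        exact pow_le_one₀ (by norm_num) (by norm_num)
      have hnorm : ‖δ * (2:ℝ)^(k'+1) * (4:ℝ)⁻¹^(k'+1)‖ ≤ 1 := by
        rw [Real.norm_eq_abs, abs_mul, abs_mul, abs_of_pos hp2, abs_of_pos hp4, mul_assoc]
        exact mul_le_one₀ hδ (by positivity) h24
      exact hWanti (by omega) (hWbal (k'+1) _ hnorm (Set.smul_mem_smul_set hw))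
  -- per-j null families
  set Xin : ℕ → ℕ × ℕ → Z := fun j q => (2:ℝ)^q.1 • g j q.1 q.2 with hXin
  have hXin_tendsto : ∀ j, Filter.Tendsto (Xin j) Filter.cofinite (𝓝 (0:Z)) := by
    intro j
    rw [Filter.tendsto_def]
    intro s hs
    rw [Filter.mem_cofinite]
    obtain ⟨m, hm⟩ := hWbasis s hs
    have h0s : (0:Z) ∈ s := mem_of_mem_nhds hs
    have hsubset : (Xin j ⁻¹' s)ᶜ ⊆ {q : ℕ × ℕ | q.1 ≤ m ∧ q.2 < len j q.1} := by
      intro q hq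
      simp only [Set.mem_compl_iff, Set.mem_preimage] at hq
      by_contra hbad
      simp only [Set.mem_setOf_eq, not_and, not_lt] at hbad
      apply hq
      by_cases hq1 : q.1 ≤ m
      · have hlenle := hbad hq1
        have : g j q.1 q.2 = 0 := hgzero j q.1 q.2 hlenle
        rw [hXin]
        simp only [this, smul_zero]
        exact h0s
      · push_neg at hq1
        have := hsmall 1 (by norm_num) j q.1 q.2 m hq1
        rw [one_smul] at this
        exact hm this
    refine Set.Finite.subset ?_ hsubset
    have hsub2 : {q : ℕ × ℕ | q.1 ≤ m ∧ q.2 < len j q.1} ⊆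
        (Set.Iic m) ×ˢ (Set.Iio (((Finset.range (m+1)).sup (len j)) + 1)) := by
      rintro ⟨q1, q2⟩ ⟨hq1, hq2⟩
      dsimp only at hq1 hq2
      refine ⟨hq1, ?_⟩
      simp only [Set.mem_Iio]
      have : len j q1 ≤ (Finset.range (m+1)).sup (len j) :=
        Finset.le_sup (Finset.mem_range.2 (by omega))
      omega
    exact Set.Finite.subset ((Set.finite_Iic m).prod (Set.finite_Iio _)) hsub2
  have hε : ∀ j, ∃ e : ℝ, 0 < e ∧ e ≤ 1 ∧
      ∀ z ∈ insert (0:Z) (Set.range (Xin j)), e • z ∈ W j := by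
    intro j
    have hB : Bornology.IsVonNBounded ℝ (insert (0:Z) (Set.range (Xin j))) :=
      ((hXin_tendsto j).isCompact_insert_range_of_cofinite).totallyBounded.isVonNBounded ℝ
    obtain ⟨r, hr⟩ := absorbs_iff_norm.1 (hB (hWmem j))
    set c := max r 1 with hc
    have hc1 : (1:ℝ) ≤ c := le_max_right _ _
    have hcpos : (0:ℝ) < c := lt_of_lt_of_le one_pos hc1
    have hsub := hr c (by rw [Real.norm_eq_abs, abs_of_pos hcpos]; exact le_max_left _ _)
    refine ⟨c⁻¹, inv_pos.2 hcpos, ?_, fun z hz => ?_⟩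
    · rw [inv_le_one_iff₀]; right; exact hc1
    · obtain ⟨w, hw, rfl⟩ := hsub hz
      rw [smul_smul, inv_mul_cancel₀ (ne_of_gt hcpos), one_smul]; exact hw
  choose ε hε1 hε2 hε3 using hε
  -- the global null family
  set X : ℕ × ℕ × ℕ → Z := fun p => ε p.1 • Xin p.1 p.2 with hX
  have hXT : Filter.Tendsto X Filter.cofinite (𝓝 (0:Z)) := by
    rw [Filter.tendsto_def]
    intro s hs
    rw [Filter.mem_cofinite]
    obtain ⟨m, hm⟩ := hWbasis s hs
    have h0s : (0:Z) ∈ s := mem_of_mem_nhds hs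
    set L := ((Finset.range (m+1)) ×ˢ (Finset.range (m+1))).sup
      (fun jk => len jk.1 jk.2) with hL
    have hsubset : (X ⁻¹' s)ᶜ ⊆ (Set.Iic m) ×ˢ ((Set.Iic m) ×ˢ (Set.Iio (L+1))) := by
      rintro ⟨j, k, i⟩ hp
      simp only [Set.mem_compl_iff, Set.mem_preimage] at hp
      by_cases hj : m + 1 ≤ j
      · exfalso
        apply hp
        apply hm
        refine hWanti (le_of_lt (Nat.lt_of_succ_le hj)) ?_
        exact hε3 j _ (Set.mem_insert_of_mem _ (Set.mem_range_self (k, i)))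
      · push_neg at hj
        by_cases hk : m + 1 ≤ k
        · exfalso
          apply hp
          apply hm
          have hδ : |ε j| ≤ 1 := by
            rw [abs_of_pos (hε1 j)]; exact hε2 j
          exact hsmall (ε j) hδ j k i m hk
        · push_neg at hk
          by_cases hi : i < len j k
          · have hlL : len j k ≤ L :=
              Finset.le_sup (f := fun jk : ℕ × ℕ => len jk.1 jk.2) (b := (j, k))
                (by rw [Finset.mem_product]
                    exact ⟨Finset.mem_range.2 (by omega), Finset.mem_range.2 (by omega)⟩)
            exact ⟨show j ≤ m by omega, show k ≤ m by omega, show i < L + 1 by omega⟩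
          · exfalso
            apply hp
            push_neg at hi
            have : g j k i = 0 := hgzero j k i hi
            rw [hX, hXin]
            simp only [this, smul_zero]
            exact h0s
    refine Set.Finite.subset
      ((Set.finite_Iic m).prod ((Set.finite_Iic m).prod (Set.finite_Iio _))) hsubset
  set T : Set Z := insert (0:Z) (Set.range X) with hTdef
  have hTcomp : IsCompact T := hXT.isCompact_insert_range_of_cofinite
  set D : Set Z := closedAbsConvexHull ℝ T with hDdef
  have hDbal : Balanced ℝ D := absConvex_convexClosedHull.1
  have hDconv : Convex ℝ D := absConvex_convexClosedHull.2
  have hDcl : IsClosed D := isClosed_closedAbsConvexHull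
  have hDcomp : IsCompact D := by
    rw [hDdef, closedAbsConvexHull_eq_closure_absConvexHull]
    exact TotallyBounded.isCompact_of_isClosed
      ((totallyBounded_absConvexHull.2 hTcomp.totallyBounded).closure) isClosed_closure
  have hTD : T ⊆ D := subset_closedAbsConvexHull
  have h0D : (0:Z) ∈ D := hTD (Set.mem_insert _ _)
  have hXD : ∀ p, X p ∈ D := fun p => hTD (Set.mem_insert_of_mem _ (Set.mem_range_self p))
  have hDbdd : Bornology.IsVonNBounded ℝ D := hDcomp.totallyBounded.isVonNBounded ℝ
  -- the Banach space Y = ℓ¹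
  haveI hfact : Fact ((1:ℝ≥0∞) ≤ 1) := ⟨le_rfl⟩
  have hnorm_sum : ∀ (a : lp (fun _ : ℕ × ℕ × ℕ => ℝ) 1) (s : Finset (ℕ × ℕ × ℕ)),
      (∑ p ∈ s, |a p|) ≤ ‖a‖ := by
    intro a s
    have h := lp.hasSum_norm (p := 1) (by norm_num) a
    simp only [ENNReal.toReal_one, Real.rpow_one] at h
    calc ∑ p ∈ s, |a p| = ∑ p ∈ s, ‖a p‖ := by simp [Real.norm_eq_abs]
      _ ≤ ‖a‖ := sum_le_hasSum s (fun i _ => norm_nonneg _) h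
  have hsummable : ∀ a : lp (fun _ : ℕ × ℕ × ℕ => ℝ) 1,
      Summable (fun p => a p • X p) := by
    intro a
    have habs : Summable (fun p => ‖a p‖) := by
      have := (lp.memℓp a).summable (p := 1) (by norm_num)
      simpa [Real.rpow_one] using this
    rw [summable_iff_vanishing]
    intro e he
    obtain ⟨O', ⟨hO'mem, hO'bal⟩, hO'e⟩ := (nhds_basis_balanced ℝ Z).mem_iff.1 he
    obtain ⟨r, hr⟩ := absorbs_iff_norm.1 (hDbdd hO'mem)
    set c := max r 1 with hc
    have hc1 : (1:ℝ) ≤ c := le_max_right _ _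
    have hcpos : (0:ℝ) < c := lt_of_lt_of_le one_pos hc1
    have hDsub : D ⊆ c • O' :=
      hr c (by rw [Real.norm_eq_abs, abs_of_pos hcpos]; exact le_max_left _ _)
    obtain ⟨s₀, hs₀⟩ := summable_iff_vanishing.1 habs (Metric.ball 0 c⁻¹)
      (Metric.ball_mem_nhds 0 (inv_pos.2 hcpos))
    refine ⟨s₀, fun t ht => ?_⟩
    have hsum_nonneg : (0:ℝ) ≤ ∑ p ∈ t, ‖a p‖ :=
      Finset.sum_nonneg fun p _ => norm_nonneg _
    have hts : ∑ p ∈ t, ‖a p‖ < c⁻¹ := by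
      have := hs₀ t ht
      rwa [Metric.mem_ball, dist_zero_right, Real.norm_eq_abs,
        abs_of_nonneg hsum_nonneg] at this
    rcases eq_or_lt_of_le hsum_nonneg with h0 | hpos
    · have hz : ∀ p ∈ t, a p • X p = 0 := by
        intro p hp
        have := (Finset.sum_eq_zero_iff_of_nonneg (fun p _ => norm_nonneg (a p))).1 h0.symm p hp
        rw [norm_eq_zero.1 this, zero_smul]
      rw [Finset.sum_eq_zero hz]
      exact mem_of_mem_nhds he
    · apply hO'e
      have hmem : (∑ p ∈ t, a p • X p) ∈ (∑ p ∈ t, ‖a p‖) • D := by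
        refine absconv_sum_mem_smul hDconv hDbal h0D t _ _ (fun p _ => hXD p) hpos ?_
        exact le_of_eq (by simp [Real.norm_eq_abs])
      have hsub2 : (∑ p ∈ t, ‖a p‖) • D ⊆ O' := by
        intro zz hzz
        have h1 : zz ∈ (∑ p ∈ t, ‖a p‖) • (c • O') := Set.smul_set_mono hDsub hzz
        rw [smul_smul] at h1
        refine hO'bal _ ?_ h1
        rw [Real.norm_eq_abs, abs_of_nonneg (mul_nonneg hsum_nonneg (le_of_lt hcpos))]
        calc (∑ p ∈ t, ‖a p‖) * c ≤ c⁻¹ * c :=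
              mul_le_mul_of_nonneg_right (le_of_lt hts) (le_of_lt hcpos)
          _ = 1 := inv_mul_cancel₀ (ne_of_gt hcpos)
      exact hsub2 hmem
  -- the linear map
  set φfun : lp (fun _ : ℕ × ℕ × ℕ => ℝ) 1 → Z := fun a => ∑' p, a p • X p with hφfun
  have hφadd : ∀ a b, φfun (a + b) = φfun a + φfun b := by
    intro a b
    rw [hφfun]
    simp only
    rw [← Summable.tsum_add (hsummable a) (hsummable b)]
    congr 1
    funext p
    rw [lp.coeFn_add]
    simp [add_smul]
  have hφsmul : ∀ (c : ℝ) (a), φfun (c • a) = c • φfun a := by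
    intro c a
    rw [hφfun]
    simp only
    rw [← Summable.tsum_const_smul c (hsummable a)]
    congr 1
    funext p
    rw [lp.coeFn_smul]
    simp [smul_smul]
  set φlin : lp (fun _ : ℕ × ℕ × ℕ => ℝ) 1 →ₗ[ℝ] Z :=
    { toFun := φfun, map_add' := hφadd, map_smul' := hφsmul } with hφlin
  have hφ_mem : ∀ (a : lp (fun _ : ℕ × ℕ × ℕ => ℝ) 1) (r : ℝ),
      0 < r → ‖a‖ ≤ r → φfun a ∈ r • D := by
    intro a r hrp har
    have hclosed : IsClosed (r • D) := hDcl.smul_of_ne_zero (ne_of_gt hrp)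
    refine hclosed.mem_of_tendsto (hsummable a).hasSum
      (Filter.Eventually.of_forall fun s => ?_)
    refine absconv_sum_mem_smul hDconv hDbal h0D s _ _ (fun p _ => hXD p) hrp ?_
    exact le_trans (hnorm_sum a s) har
  have hcont : Continuous φlin := by
    refine (uniformContinuous_of_continuousAt_zero φlin ?_).continuous
    rw [ContinuousAt, map_zero]
    intro e he
    obtain ⟨O', ⟨hO'mem, hO'bal⟩, hO'e⟩ := (nhds_basis_balanced ℝ Z).mem_iff.1 he
    obtain ⟨r, hr⟩ := absorbs_iff_norm.1 (hDbdd hO'mem)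
    set c := max r 1 with hc
    have hc1 : (1:ℝ) ≤ c := le_max_right _ _
    have hcpos : (0:ℝ) < c := lt_of_lt_of_le one_pos hc1
    have hDsub : D ⊆ c • O' :=
      hr c (by rw [Real.norm_eq_abs, abs_of_pos hcpos]; exact le_max_left _ _)
    rw [Filter.mem_map]
    refine Filter.mem_of_superset
      (Metric.closedBall_mem_nhds (0 : lp (fun _ : ℕ × ℕ × ℕ => ℝ) 1) (inv_pos.2 hcpos))
      fun a ha => ?_
    have h1 : φfun a ∈ c⁻¹ • D := by
      refine hφ_mem a c⁻¹ (inv_pos.2 hcpos) ?_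
      rwa [Metric.mem_closedBall, dist_zero_right] at ha
    apply hO'e
    have h2 : φfun a ∈ c⁻¹ • (c • O') := Set.smul_set_mono hDsub h1
    rw [smul_smul, inv_mul_cancel₀ (ne_of_gt hcpos), one_smul] at h2
    exact h2
  refine ⟨lp (fun _ : ℕ × ℕ × ℕ => ℝ) 1, inferInstance, inferInstance, inferInstance,
    ⟨φlin, hcont⟩, ⟨Metric.ball 0 1, Metric.isOpen_ball, ⟨0, Metric.mem_ball_self one_pos⟩, ?_⟩, ?_⟩
  · -- compactness of the closure of the image of the unit ball
    have himg : (⇑(⟨φlin, hcont⟩ : lp (fun _ : ℕ × ℕ × ℕ => ℝ) 1 →L[ℝ] Z)) ''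
        Metric.ball 0 1 ⊆ D := by
      rintro _ ⟨a, ha, rfl⟩
      have := hφ_mem a 1 one_pos (le_of_lt (by rwa [Metric.mem_ball, dist_zero_right] at ha))
      rwa [one_smul] at this
    exact hDcomp.of_isClosed_subset isClosed_closure (closure_minimal himg hDcl)
  · -- K is contained in the range
    intro x hx
    rw [← hKfU] at hx
    obtain ⟨_, ⟨j, rfl⟩, hxj⟩ := hx
    have hdec' : ∀ k (z : Z), ∃ y : Z, z ∈ (Cs j k).1 →
        (y ∈ G j k ∧ z - y ∈ (Cs j (k+1)).1) := by
      intro k z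
      by_cases hz : z ∈ (Cs j k).1
      · obtain ⟨y, hy1, hy2⟩ := hdec j k z hz
        exact ⟨y, fun _ => ⟨hy1, hy2⟩⟩
      · exact ⟨0, fun h => absurd h hz⟩
    choose Yc hYc using hdec'
    set rr : ℕ → Z := fun k => Nat.rec x (fun k rk => rk - Yc k rk) k with hrr
    set f : ℕ → Z := fun k => Yc k (rr k) with hf
    have hrrsucc : ∀ k, rr (k+1) = rr k - f k := fun k => rfl
    have hrinv : ∀ k, rr k ∈ (Cs j k).1 ∧ rr k = x - ∑ i ∈ Finset.range k, f i := by
      intro k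
      induction k with
      | zero => exact ⟨hxj, by simp [show rr 0 = x from rfl]⟩
      | succ k ih =>
        have hstep := hYc k (rr k) ih.1
        refine ⟨hstep.2, ?_⟩
        rw [hrrsucc, ih.2, Finset.sum_range_succ]
        abel
    have hfG : ∀ k, f k ∈ G j k := fun k => (hYc k (rr k) (hrinv k).1).1
    have hfW : ∀ k, 1 ≤ k → f k ∈ W k := by
      intro k hk
      obtain ⟨k', rfl⟩ : ∃ k', k = k' + 1 := ⟨k - 1, by omega⟩
      exact hVsubW (k'+1) (hCV j k' (hGC j (k'+1) (hfG (k'+1))))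
    -- the series ∑ f k sums to x
    have hHasSumf : HasSum f x := by
      rw [HasSum]
      rw [SummationFilter.unconditional_filter]
      rw [Filter.tendsto_atTop']
      intro e he
      have hcontx : Filter.Tendsto (fun y : Z => x + y) (𝓝 0) (𝓝 x) := by
        have h := (continuous_const.add continuous_id :
          Continuous fun y : Z => x + y).tendsto 0
        convert h using 2 <;> simp
      rw [Filter.tendsto_def] at hcontx
      obtain ⟨m, hm⟩ := hWbasis _ (hcontx e he)
      refine ⟨Finset.range (m+2), fun s hs => ?_⟩
      have h0s : (0:ℕ) ∈ s := hs (Finset.mem_range.2 (by omega))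
      set M := s.max' ⟨0, h0s⟩ with hM
      have hsub : s ⊆ Finset.range (M+1) := fun k hk =>
        Finset.mem_range.2 (Nat.lt_succ_of_le (s.le_max' k hk))
      have hMm : m + 1 ≤ M := s.le_max' (m+1) (hs (Finset.mem_range.2 (by omega)))
      set t := Finset.range (M+1) \ s with ht
      have hsplit : ∑ i ∈ t, f i + ∑ i ∈ s, f i = ∑ i ∈ Finset.range (M+1), f i :=
        Finset.sum_sdiff hsub
      have hrM : x - ∑ i ∈ Finset.range (M+1), f i ∈ W (M+1) := by
        have h1 := (hrinv (M+1)).1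
        rw [(hrinv (M+1)).2] at h1
        exact hVsubW (M+1) (by
          have := hCV j M
          rcases Nat.exists_eq_add_of_le (Nat.le_refl (M+1)) with _
          exact hCV j M h1)
      have htmem : ∑ i ∈ t, f i ∈ W (m+1) := by
        refine chain_sum_mem W hWsub hWadd hW0 t (m+1) f ?_ ?_
        · intro k hk
          rw [ht, Finset.mem_sdiff] at hk
          have : k ∉ Finset.range (m+2) := fun hc => hk.2 (hs hc)
          simp only [Finset.mem_range, not_lt] at this
          omega
        · intro k hk
          rw [ht, Finset.mem_sdiff] at hk
          have hknot : k ∉ Finset.range (m+2) := fun hc => hk.2 (hs hc)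
          simp only [Finset.mem_range, not_lt] at hknot
          exact hfW k (by omega)
      have hdiff : x - ∑ i ∈ s, f i ∈ W m := by
        have heq : x - ∑ i ∈ s, f i =
            (x - ∑ i ∈ Finset.range (M+1), f i) + ∑ i ∈ t, f i := by
          rw [← hsplit]; abel
        rw [heq]
        have hh1 : (x - ∑ i ∈ Finset.range (M+1), f i) ∈ W (m+1) :=
          hWanti (by omega) hrM
        exact hWadd m (Set.add_mem_add hh1 htmem)
      have hfinal := hm (hWneg m _ hdiff)
      simp only [Set.mem_preimage] at hfinal
      have : x + -(x - ∑ i ∈ s, f i) = ∑ i ∈ s, f i := by abel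
      rwa [this] at hfinal
    -- build the ℓ¹ element
    have hidx0 : ∀ k, ∃ i, g j k i = f k := fun k => hgsurj j k (f k) (hfG k)
    choose idx hidx using hidx0
    set em : ℕ → ℕ × ℕ × ℕ := fun k => (j, k, idx k) with hem
    have hem_inj : Function.Injective em := by
      intro k1 k2 h
      exact congrArg (fun p : ℕ × ℕ × ℕ => p.2.1) h
    set a0 : ℕ → ℝ := fun k => (ε j * 2^k)⁻¹ with ha0
    set a : ℕ × ℕ × ℕ → ℝ := Function.extend em a0 (fun _ => (0:ℝ)) with ha
    have haoff : ∀ p ∉ Set.range em, a p = 0 := by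
      intro p hp
      rw [ha]
      exact Function.extend_apply' a0 _ p (by rintro ⟨k, hk⟩; exact hp ⟨k, hk⟩)
    have hae : ∀ k, a (em k) = a0 k := fun k => hem_inj.extend_apply a0 _ k
    have hepos : ∀ k : ℕ, (0:ℝ) < ε j * 2^k := fun k => mul_pos (hε1 j) (by positivity)
    have hterm : ∀ k, a (em k) • X (em k) = f k := by
      intro k
      rw [hae]
      have hXv : X (em k) = (ε j * 2^k) • f k := by
        rw [hX, hXin]
        simp only [hem]
        rw [hidx, smul_smul]
      rw [hXv, ha0]
      simp only
      rw [smul_smul, inv_mul_cancel₀ (ne_of_gt (hepos k)), one_smul]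
    have haMem : Memℓp a 1 := by
      apply memℓp_gen
      simp only [ENNReal.toReal_one, Real.rpow_one]
      rw [← hem_inj.summable_iff (f := fun p => ‖a p‖)
        (fun p hp => by show ‖a p‖ = 0; rw [haoff p hp, norm_zero])]
      have heq2 : ((fun p => ‖a p‖) ∘ em) = fun k => (ε j)⁻¹ * ((2:ℝ)⁻¹)^k := by
        funext k
        simp only [Function.comp_apply]
        rw [hae, ha0]
        simp only
        rw [Real.norm_eq_abs, abs_of_pos (inv_pos.2 (hepos k)), mul_inv, inv_pow]
      rw [heq2]
      exact (summable_geometric_of_lt_one (by norm_num) (by norm_num)).mul_left _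
    have hHasSumA : HasSum (fun p => a p • X p) x := by
      rw [← hem_inj.hasSum_iff (f := fun p => a p • X p)
        (fun p hp => by show a p • X p = 0; rw [haoff p hp, zero_smul])]
      have heq3 : ((fun p => a p • X p) ∘ em) = f := by
        funext k
        simp only [Function.comp_apply]
        exact hterm k
      rw [heq3]
      exact hHasSumf
    refine ⟨⟨a, haMem⟩, ?_⟩
    exact hHasSumA.tsum_eq
end

section
/- Let (Y_j, ‖·‖_j), j ∈ ℕ, be a sequence of Banach spaces, Z a Fréchet space with defining seminorms p_1 ≤ p_2 ≤ …, and φ_j : Y_j → Z compact continuous linear maps satisfying p_j(φ_j(y)) ≤ ‖y‖_j / 2^j for all y ∈ Y_j. Then on the ℓ¹-sum Y = {(y_j) : y_j ∈ Y_j, Σ_j ‖y_j‖_j < ∞}, the map φ((y_j)) = Σ_j φ_j(y_j) is a well-defined compact continuous linear map Y → Z whose range contains ⋃_j φ_j(Y_j). -/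
open Filter Topology Set Pointwise

set_option linter.unusedSectionVars false

section Aux

variable {Z : Type*} [AddCommGroup Z] [Module ℝ Z] [UniformSpace Z] [IsUniformAddGroup Z]
    [ContinuousSMul ℝ Z] [TopologicalSpace.MetrizableSpace Z]

lemma seminorm_sum_le' (q : Seminorm ℝ Z) {ι : Type*} (s : Finset ι) (f : ι → Z) :
    q (∑ i ∈ s, f i) ≤ ∑ i ∈ s, q (f i) :=
  Finset.le_sum_of_subadditive q (map_zero q).le (map_add_le_add q) s f

lemma seminorm_tsum_le' (q : Seminorm ℝ Z) (hq : Continuous q) {ι : Type*} {f : ι → Z}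
    (hf : Summable f) {b : ι → ℝ} (hb : Summable b) (h : ∀ i, q (f i) ≤ b i) :
    q (∑' i, f i) ≤ ∑' i, b i := by
  have h1 : Tendsto (fun s : Finset ι => q (∑ i ∈ s, f i)) atTop (𝓝 (q (∑' i, f i))) :=
    (hq.tendsto _).comp hf.hasSum
  refine le_of_tendsto h1 (Eventually.of_forall fun s => ?_)
  calc q (∑ i ∈ s, f i) ≤ ∑ i ∈ s, q (f i) := seminorm_sum_le' q s f
    _ ≤ ∑ i ∈ s, b i := Finset.sum_le_sum fun i _ => h i
    _ ≤ ∑' i, b i := Summable.sum_le_tsum s (fun i _ => le_trans (apply_nonneg q (f i)) (h i)) hb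

lemma isCompact_closure_image' {X : Type*} [TopologicalSpace X] {f : X → Z} (hf : Continuous f)
    {s : Set X} (hs : IsCompact (closure s)) : IsCompact (closure (f '' s)) := by
  have h1 : IsCompact (f '' closure s) := hs.image hf
  refine h1.of_isClosed_subset isClosed_closure (closure_minimal ?_ h1.isClosed)
  exact image_mono subset_closure

end Aux

/-- given Banach spaces `Y j`, a Fréchet space `Z` with an increasing family of
defining seminorms `p`, and compact continuous linear maps `φⱼ : Y j → Z` with
`p j (φⱼ y) ≤ ‖y‖ / 2 ^ j`, the map `φ (y) = ∑ⱼ φⱼ (y j)` is a well-defined compact continuous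
linear map on the `ℓ¹`-sum of the `Y j` whose range contains `⋃ⱼ φⱼ (Y j)`. -/
theorem lp_sum_of_compact_maps
    {Z : Type*} [AddCommGroup Z] [Module ℝ Z] [UniformSpace Z] [IsUniformAddGroup Z]
    [ContinuousSMul ℝ Z] [LocallyConvexSpace ℝ Z] [CompleteSpace Z]
    [TopologicalSpace.MetrizableSpace Z]
    (p : SeminormFamily ℝ Z ℕ) (hmono : Monotone p) (hp : WithSeminorms p)
    (Y : ℕ → Type*) [∀ j, NormedAddCommGroup (Y j)] [∀ j, NormedSpace ℝ (Y j)]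
    [∀ j, CompleteSpace (Y j)]
    (φj : ∀ j, Y j →L[ℝ] Z)
    (hcomp : ∀ j, ∃ U : Set (Y j), IsOpen U ∧ U.Nonempty ∧ IsCompact (closure (φj j '' U)))
    (hbound : ∀ j (y : Y j), p j (φj j y) ≤ ‖y‖ / 2 ^ j) :
    ∃ φ : lp Y 1 →L[ℝ] Z,
      (∀ y : lp Y 1, HasSum (fun j => φj j (y j)) (φ y)) ∧
      (∃ U : Set (lp Y 1), IsOpen U ∧ U.Nonempty ∧ IsCompact (closure (φ '' U))) ∧
      ∀ j, Set.range (φj j) ⊆ Set.range φ := by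
  classical
  have h1 : (0:ℝ) < (1 : ENNReal).toReal := by norm_num
  -- norm facts on `lp Y 1`
  have hsn : ∀ y : lp Y 1, Summable fun j => ‖y j‖ := by
    intro y
    have := (lp.hasSum_norm h1 y).summable
    simpa using this
  have hnorm : ∀ y : lp Y 1, ∑' j, ‖y j‖ = ‖y‖ := by
    intro y
    have := (lp.hasSum_norm h1 y).tsum_eq
    simpa using this
  -- bounds for `p k ∘ φj j`
  have hCex : ∀ k j, ∃ C : ℝ, 0 < C ∧ ∀ x : Y j, p k (φj j x) ≤ C * ‖x‖ := by
    intro k j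
    have hc : Continuous ⇑((p k).comp ((φj j) : Y j →ₗ[ℝ] Z)) := by
      rw [Seminorm.coe_comp]
      exact (hp.continuous_seminorm k).comp (φj j).continuous
    simpa [Seminorm.comp_apply] using
      Seminorm.bound_of_continuous_normedSpace ((p k).comp ((φj j) : Y j →ₗ[ℝ] Z)) hc
  choose C hCpos hC using hCex
  set M : ℕ → ℝ := fun k => 1 + ∑ j ∈ Finset.range (k+1), C k j with hMdef
  have hM1 : ∀ k, 1 ≤ M k := fun k =>
    le_add_of_nonneg_right (Finset.sum_nonneg fun j _ => (hCpos k j).le)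
  have hM0 : ∀ k, 0 ≤ M k := fun k => zero_le_one.trans (hM1 k)
  have hMb : ∀ k j (x : Y j), p k (φj j x) ≤ M k * ‖x‖ := by
    intro k j x
    rcases lt_or_ge j (k+1) with h | h
    · refine (hC k j x).trans (mul_le_mul_of_nonneg_right ?_ (norm_nonneg x))
      calc C k j ≤ ∑ i ∈ Finset.range (k+1), C k i :=
            Finset.single_le_sum (fun i _ => (hCpos k i).le) (Finset.mem_range.mpr h)
        _ ≤ M k := le_add_of_nonneg_left zero_le_one
    · have h2 : p k (φj j x) ≤ p j (φj j x) :=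
        Seminorm.le_def.mp (hmono (Nat.le_of_succ_le h)) _
      calc p k (φj j x) ≤ ‖x‖ / 2 ^ j := h2.trans (hbound j x)
        _ ≤ ‖x‖ := div_le_self (norm_nonneg x) (one_le_pow₀ one_le_two)
        _ ≤ M k * ‖x‖ := le_mul_of_one_le_left (norm_nonneg x) (hM1 k)
  -- easy tail bound
  have htail_term : ∀ (N j : ℕ), N ≤ j → ∀ x : Y j, p N (φj j x) ≤ ‖x‖ / 2 ^ j := by
    intro N j hNj x
    exact (Seminorm.le_def.mp (hmono hNj) _).trans (hbound j x)
  -- dominating seminorms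
  have hsupN : ∀ (s : Finset ℕ) (z : Z), (s.sup p) z ≤ p (s.sup id) z := by
    intro s z
    exact Seminorm.finset_sup_apply_le (apply_nonneg _ _) fun i hi =>
      Seminorm.le_def.mp (hmono (Finset.le_sup (f := id) hi)) z
  -- summability of the series defining φ
  have hsummable : ∀ y : lp Y 1, Summable fun j => φj j (y j) := by
    intro y
    rw [summable_iff_vanishing]
    intro e he
    obtain ⟨V, hVb, hVe⟩ := hp.hasBasis.mem_iff.mp he
    obtain ⟨s, r, hr, rfl⟩ := p.basisSets_iff.mp hVb
    set N := s.sup id with hNdef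
    obtain ⟨s₀, hs₀⟩ := (hsn y).vanishing (Metric.ball_mem_nhds (0:ℝ) hr)
    refine ⟨s₀ ∪ Finset.range N, fun t ht => hVe ?_⟩
    simp only [id] at *
    rw [Seminorm.mem_ball, sub_zero]
    have hsum := hs₀ t (ht.mono_right Finset.subset_union_left)
    rw [Metric.mem_ball, dist_zero_right, Real.norm_eq_abs] at hsum
    have hterm : ∀ j ∈ t, p N (φj j (y j)) ≤ ‖y j‖ := by
      intro j hj
      have hjN : N ≤ j := by
        by_contra hcon
        exact (Finset.disjoint_left.mp ht) hj
          (Finset.mem_union_right _ (Finset.mem_range.mpr (lt_of_not_ge hcon)))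
      exact (htail_term N j hjN (y j)).trans (div_le_self (norm_nonneg _) (one_le_pow₀ one_le_two))
    calc (s.sup p) (∑ j ∈ t, φj j (y j)) ≤ p N (∑ j ∈ t, φj j (y j)) := hsupN s _
      _ ≤ ∑ j ∈ t, p N (φj j (y j)) := seminorm_sum_le' _ _ _
      _ ≤ ∑ j ∈ t, ‖y j‖ := Finset.sum_le_sum hterm
      _ ≤ |∑ j ∈ t, ‖y j‖| := le_abs_self _
      _ < r := hsum
  -- the linear map
  set L : lp Y 1 →ₗ[ℝ] Z :=
    { toFun := fun y => ∑' j, φj j (y j)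
      map_add' := by
        intro y z
        have heq : (fun j => φj j ((y + z) j)) =
            fun j => φj j (y j) + φj j (z j) := by
          funext j
          rw [lp.coeFn_add, Pi.add_apply, map_add]
        simp only [heq]
        exact Summable.tsum_add (hsummable y) (hsummable z)
      map_smul' := by
        intro c y
        have heq : (fun j => φj j ((c • y) j)) = fun j => c • φj j (y j) := by
          funext j
          rw [lp.coeFn_smul, Pi.smul_apply, map_smul]
        simp only [heq, RingHom.id_apply]
        exact Summable.tsum_const_smul c (hsummable y) } with hLdef
  have hLapply : ∀ y : lp Y 1, L y = ∑' j, φj j (y j) := fun y => rfl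
  -- seminorm bound for L
  have hLbound : ∀ (k : ℕ) (y : lp Y 1), p k (L y) ≤ M k * ‖y‖ := by
    intro k y
    have hle : p k (L y) ≤ ∑' j, M k * ‖y j‖ := by
      rw [hLapply]
      exact seminorm_tsum_le' (p k) (hp.continuous_seminorm k) (hsummable y)
        ((hsn y).mul_left (M k)) (fun j => hMb k j (y j))
    rwa [tsum_mul_left, hnorm y] at hle
  have hLcont : Continuous ⇑L := by
    refine Seminorm.cont_normedSpace_to_withSeminorms (lp Y 1) hp L fun k =>
      ⟨⟨M k, hM0 k⟩, ?_⟩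
    rw [Seminorm.le_def]
    intro y
    show p k (L y) ≤ M k * ‖y‖
    simpa [NNReal.smul_def] using hLbound k y
  set φ : lp Y 1 →L[ℝ] Z := ⟨L, hLcont⟩ with hφdef
  have hφapply : ∀ y : lp Y 1, φ y = ∑' j, φj j (y j) := fun y => rfl
  have hφHasSum : ∀ y : lp Y 1, HasSum (fun j => φj j (y j)) (φ y) := by
    intro y
    rw [hφapply]
    exact (hsummable y).hasSum
  -- compactness of the building blocks on closed balls
  have hKj : ∀ j, IsCompact (closure (φj j '' Metric.closedBall 0 1)) := by
    intro j
    obtain ⟨U, hUo, ⟨x₀, hx₀⟩, hUc⟩ := hcomp j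
    obtain ⟨ε, hε, hball⟩ := Metric.isOpen_iff.mp hUo x₀ hx₀
    have key : φj j '' Metric.closedBall 0 1 ⊆
        (fun z => (2/ε) • (z - φj j x₀)) '' (φj j '' U) := by
      rintro _ ⟨x, hx, rfl⟩
      rw [Metric.mem_closedBall, dist_zero_right] at hx
      refine ⟨φj j (x₀ + (ε/2) • x), ⟨x₀ + (ε/2) • x, hball ?_, rfl⟩, ?_⟩
      · rw [Metric.mem_ball, dist_self_add_left, norm_smul]
        calc ‖ε/2‖ * ‖x‖ ≤ (ε/2) * 1 := by
              refine mul_le_mul ?_ hx (norm_nonneg x) (by positivity)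
              rw [Real.norm_eq_abs, abs_of_pos (by positivity)]
        _ < ε := by linarith
      · have h21 : (2/ε) * (ε/2) = 1 := by field_simp
        simp only [map_add, map_smul, add_sub_cancel_left, smul_smul, h21, one_smul]
    have hcont : Continuous fun z : Z => (2/ε) • (z - φj j x₀) :=
      (continuous_id.sub continuous_const).const_smul _
    have h2 := isCompact_closure_image' hcont hUc
    exact h2.of_isClosed_subset isClosed_closure (closure_mono key)
  -- cumulative compact sets
  set Cset : ℕ → Set Z := fun n =>
    Nat.rec {0} (fun m Cm => Cm + closure (φj m '' Metric.closedBall 0 1)) n with hCsetdef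
  have hCsucc : ∀ m, Cset (m+1) = Cset m + closure (φj m '' Metric.closedBall 0 1) :=
    fun m => rfl
  have hCcompact : ∀ n, IsCompact (Cset n) := by
    intro n
    induction n with
    | zero => exact isCompact_singleton
    | succ m ih => rw [hCsucc]; exact ih.add (hKj m)
  have hCmem : ∀ (n : ℕ) (f : ℕ → Z),
      (∀ j < n, f j ∈ closure (φj j '' Metric.closedBall 0 1)) →
      (∑ j ∈ Finset.range n, f j) ∈ Cset n := by
    intro n
    induction n with
    | zero => intro f _; simp [hCsetdef]
    | succ m ih =>
      intro f hf
      rw [Finset.sum_range_succ, hCsucc]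
      exact Set.add_mem_add (ih f fun j hj => hf j (hj.trans (Nat.lt_succ_self m)))
        (hf m (Nat.lt_succ_self m))
  -- total boundedness of the image of the unit ball
  have hTB : TotallyBounded (⇑φ '' Metric.ball (0 : lp Y 1) 1) := by
    rw [totallyBounded_iff_subset_finite_iUnion_nhds_zero]
    intro e he
    obtain ⟨V, hVb, hVe⟩ := hp.hasBasis.mem_iff.mp he
    obtain ⟨s, r, hr, rfl⟩ := p.basisSets_iff.mp hVb
    set N := s.sup id with hNdef
    obtain ⟨n₀, hn₀⟩ := exists_pow_lt_of_lt_one (half_pos hr) (by norm_num : (1:ℝ)/2 < 1)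
    set n := max N n₀ with hndef
    have hW : (p N).ball 0 (r/2) ∈ 𝓝 (0:Z) :=
      hp.hasBasis.mem_of_mem (p.basisSets_singleton_mem N (half_pos hr))
    obtain ⟨t, htf, htsub⟩ := totallyBounded_iff_subset_finite_iUnion_nhds_zero.mp
      (hCcompact n).totallyBounded _ hW
    refine ⟨t, htf, ?_⟩
    rintro _ ⟨y, hy, rfl⟩
    rw [Metric.mem_ball, dist_zero_right] at hy
    have hyj : ∀ j, ‖y j‖ ≤ 1 := fun j =>
      (lp.norm_apply_le_norm one_ne_zero y j).trans hy.le
    have hhead : (∑ j ∈ Finset.range n, φj j (y j)) ∈ Cset n := by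
      refine hCmem n _ fun j _ => subset_closure ⟨y j, ?_, rfl⟩
      rw [Metric.mem_closedBall, dist_zero_right]
      exact hyj j
    obtain ⟨z₀, hz₀t, hz₀⟩ := Set.mem_iUnion₂.mp (htsub hhead)
    refine Set.mem_iUnion₂.mpr ⟨z₀, hz₀t, ?_⟩
    rw [Set.mem_vadd_set_iff_neg_vadd_mem] at hz₀ ⊢
    rw [vadd_eq_add, Seminorm.mem_ball, sub_zero] at hz₀
    refine hVe ?_
    show -z₀ + φ y ∈ (s.sup p).ball 0 r
    rw [Seminorm.mem_ball, sub_zero]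
    set K : Set ℕ := (↑(Finset.range n) : Set ℕ)ᶜ with hKdef
    -- decomposition into head and tail
    have hdecomp : (∑ j ∈ Finset.range n, φj j (y j)) + (∑' j : K, φj (j:ℕ) (y (j:ℕ)))
        = ∑' j, φj j (y j) := Summable.sum_add_tsum_compl (hsummable y)
    have hsplit : -z₀ + φ y = (-z₀ + ∑ j ∈ Finset.range n, φj j (y j)) +
        ∑' j : K, φj (j:ℕ) (y (j:ℕ)) := by
      rw [hφapply, ← hdecomp]; abel
    -- tail bound
    have hjK : ∀ j : K, n ≤ (j : ℕ) := by
      rintro ⟨j, hj⟩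
      simpa [hKdef, Finset.mem_coe, Finset.mem_range, not_lt] using hj
    have htail : p N (∑' j : K, φj (j:ℕ) (y (j:ℕ))) ≤ (1/2) ^ n := by
      have hb : Summable fun j : K => ‖y (j:ℕ)‖ * (1/2) ^ n :=
        ((hsn y).subtype _).mul_right _
      have hle : p N (∑' j : K, φj (j:ℕ) (y (j:ℕ)))
          ≤ ∑' j : K, ‖y (j:ℕ)‖ * (1/2) ^ n := by
        refine seminorm_tsum_le' (p N) (hp.continuous_seminorm N)
          ((hsummable y).subtype _) hb fun j => ?_
        have hjn : n ≤ (j : ℕ) := hjK j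
        have hjN : N ≤ (j : ℕ) := le_trans (le_max_left _ _) hjn
        calc p N (φj (j:ℕ) (y (j:ℕ))) ≤ ‖y (j:ℕ)‖ / 2 ^ (j:ℕ) := htail_term N _ hjN _
          _ = ‖y (j:ℕ)‖ * (1/2) ^ (j:ℕ) := by rw [div_pow, one_pow, div_eq_mul_one_div]
          _ ≤ ‖y (j:ℕ)‖ * (1/2) ^ n := by
              refine mul_le_mul_of_nonneg_left ?_ (norm_nonneg _)
              exact pow_le_pow_of_le_one (by norm_num) (by norm_num) hjn
      refine hle.trans ?_
      rw [tsum_mul_right]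
      have hdecompn : (∑ j ∈ Finset.range n, ‖y j‖) + (∑' j : K, ‖y (j:ℕ)‖)
          = ∑' j, ‖y j‖ := Summable.sum_add_tsum_compl (hsn y)
      have hnn : (0:ℝ) ≤ ∑ j ∈ Finset.range n, ‖y j‖ :=
        Finset.sum_nonneg fun j _ => norm_nonneg _
      have hsub : ∑' j : K, ‖y (j:ℕ)‖ ≤ 1 := by
        have h2 : ∑' j : K, ‖y (j:ℕ)‖ ≤ ∑' j, ‖y j‖ := by
          rw [← hdecompn]; linarith
        exact h2.trans (by rw [hnorm y]; exact hy.le)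
      calc (∑' j : K, ‖y (j:ℕ)‖) * (1/2) ^ n
          ≤ 1 * (1/2) ^ n := mul_le_mul_of_nonneg_right hsub (by positivity)
        _ = (1/2) ^ n := one_mul _
    have hpow : ((1:ℝ)/2) ^ n < r / 2 :=
      lt_of_le_of_lt (pow_le_pow_of_le_one (by norm_num) (by norm_num) (le_max_right N n₀)) hn₀
    calc (s.sup p) (-z₀ + φ y) ≤ p N (-z₀ + φ y) := hsupN s _
      _ ≤ p N (-z₀ + ∑ j ∈ Finset.range n, φj j (y j)) +
          p N (∑' j : K, φj (j:ℕ) (y (j:ℕ))) := by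
            rw [hsplit]; exact map_add_le_add _ _ _
      _ < r/2 + r/2 := add_lt_add_of_lt_of_le hz₀ (htail.trans hpow.le)
      _ = r := add_halves r
  have hcompact : IsCompact (closure (⇑φ '' Metric.ball (0 : lp Y 1) 1)) := by
    rw [isCompact_iff_totallyBounded_isComplete]
    exact ⟨hTB.closure, isClosed_closure.isComplete⟩
  -- range inclusion
  have hrange : ∀ j, Set.range ⇑(φj j) ⊆ Set.range ⇑φ := by
    rintro j _ ⟨x, rfl⟩
    refine ⟨lp.single 1 j x, ?_⟩
    have h0 : ∀ i, i ≠ j → φj i ((lp.single 1 j x) i) = 0 := by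
      intro i hi
      rw [lp.single_apply_ne 1 j x hi, map_zero]
    have h1 : HasSum (fun i => φj i ((lp.single 1 j x) i)) (φj j ((lp.single 1 j x) j)) :=
      hasSum_single j h0
    rw [lp.single_apply_self] at h1
    exact ((hφHasSum (lp.single 1 j x)).unique h1)
  exact ⟨φ, hφHasSum, ⟨Metric.ball 0 1, Metric.isOpen_ball,
    ⟨0, Metric.mem_ball_self one_pos⟩, hcompact⟩, hrange⟩
end

section
/- Let A, B be complex Banach spaces, V ⊆ ℂⁿ open, U an open set with compact closure contained in V, and k : V → L(A, B) a holomorphic operator-valued map such that k(x) is a compact operator for every x ∈ V. Then the linear map α sending a bounded holomorphic function f : V → A to the function x ↦ k(x) f(x) on U is a compact operator from the Banach space of bounded holomorphic A-valued functions on V (sup norm) to the space of continuous B-valued functions on U with the topology of locally uniform convergence. -/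
open Metric Set Topology

lemma schwarz_lip {A : Type*} [NormedAddCommGroup A] [NormedSpace ℂ A]
    {E : Type*} [NormedAddCommGroup E] [NormedSpace ℂ E]
    {f : E → A} {V : Set E} (hf : DifferentiableOn ℂ f V)
    (hb : ∀ x ∈ V, ‖f x‖ ≤ 1) {c z : E} {r : ℝ} (hr : 0 < r)
    (hball : ball c r ⊆ V) (hz : z ∈ ball c r) :
    ‖f z - f c‖ ≤ 3 / r * ‖z - c‖ := by
  rcases eq_or_ne z c with rfl | hzc
  · simp
  set v := z - c with hv
  have hvne : ‖v‖ ≠ 0 := by simpa [hv, sub_eq_zero] using hzc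
  have hvpos : 0 < ‖v‖ := lt_of_le_of_ne (norm_nonneg _) (Ne.symm hvne)
  set R : ℝ := r / ‖v‖ with hR
  have hRpos : 0 < R := div_pos hr hvpos
  set g : ℂ → A := fun t => f (c + t • v) with hg
  have hmaps : MapsTo (fun t : ℂ => c + t • v) (ball (0:ℂ) R) (ball c r) := by
    intro t ht
    simp only [mem_ball, dist_eq_norm] at ht ⊢
    have : ‖c + t • v - c‖ = ‖t‖ * ‖v‖ := by simp [norm_smul]
    rw [this]
    calc ‖t‖ * ‖v‖ < R * ‖v‖ := mul_lt_mul_of_pos_right (by simpa using ht) hvpos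
      _ = r := by rw [hR]; field_simp
  have hgd : DifferentiableOn ℂ g (ball (0:ℂ) R) := by
    apply hf.comp
    · exact (differentiable_const c |>.add ((differentiable_id).smul_const v)).differentiableOn
    · exact fun t ht => hball (hmaps ht)
  have hg0 : g 0 = f c := by simp [hg]
  have hgmaps : MapsTo g (ball (0:ℂ) R) (ball (g 0) 3) := by
    intro t ht
    have h1 : ‖g t‖ ≤ 1 := hb _ (hball (hmaps ht))
    have h2 : ‖g 0‖ ≤ 1 := by rw [hg0]; exact hb _ (hball (mem_ball_self hr))
    rw [mem_ball, dist_eq_norm]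
    calc ‖g t - g 0‖ ≤ ‖g t‖ + ‖g 0‖ := norm_sub_le _ _
      _ ≤ 2 := by linarith
      _ < 3 := by norm_num
  have h1R : (1:ℂ) ∈ ball (0:ℂ) R := by
    simp only [mem_ball, dist_zero_right, norm_one]
    rw [hR, lt_div_iff₀ hvpos, one_mul]
    simpa [dist_eq_norm] using hz
  have key := Complex.norm_dslope_le_div_of_mapsTo_ball hgd (hgmaps.mono_right ball_subset_closedBall) h1R
  have hds : dslope g 0 1 = g 1 - g 0 := by
    rw [dslope_of_ne _ (by norm_num : (1:ℂ) ≠ 0)]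
    simp [slope_def_module]
  rw [hds] at key
  have hg1 : g 1 = f z := by simp [hg, hv]
  rw [hg1, hg0] at key
  calc ‖f z - f c‖ ≤ 3 / R := key
    _ = 3 / r * ‖z - c‖ := by rw [hR]; field_simp; rfl

/-- Proposition 4.1: for Banach spaces `A, B`, open sets `U ⊂⊂ V ⊆ ℂⁿ`, and a
holomorphic fiberwise-compact operator-valued map `k : V → L(A,B)`, the map
`α : f ↦ (x ↦ k x (f x))|U` is a compact operator from the Banach space of bounded holomorphic
`A`-valued functions on `V` (sup norm) to `C(U, B)` with the topology of locally uniform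
convergence: the image under `α` of the unit ball has compact closure. -/
theorem fiberwise_compact_mult_is_compact_operator
    {A : Type*} [NormedAddCommGroup A] [NormedSpace ℂ A] [CompleteSpace A]
    {B : Type*} [NormedAddCommGroup B] [NormedSpace ℂ B] [CompleteSpace B]
    {n : ℕ} (V U : Set (Fin n → ℂ)) (hV : IsOpen V) (hU : IsOpen U)
    (hUc : IsCompact (closure U)) (hUV : closure U ⊆ V)
    (k : (Fin n → ℂ) → A →L[ℂ] B) (hk : DifferentiableOn ℂ k V)
    (hkc : ∀ x ∈ V, IsCompactOperator (k x)) :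
    IsCompact (closure {g : C(U, B) |
      ∃ f : (Fin n → ℂ) → A, DifferentiableOn ℂ f V ∧ (∀ x ∈ V, ‖f x‖ ≤ 1) ∧
        ∀ x : U, g x = k x (f x)}) := by
  have hUsubV : U ⊆ V := subset_closure.trans hUV
  haveI : LocallyCompactSpace ↥U := hU.locallyCompactSpace
  set S : Set C(U, B) := {g : C(U, B) |
      ∃ f : (Fin n → ℂ) → A, DifferentiableOn ℂ f V ∧ (∀ x ∈ V, ‖f x‖ ≤ 1) ∧
        ∀ x : U, g x = k x (f x)} with hS
  -- bound on ‖k x‖ over closure U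
  obtain ⟨M, hM⟩ : ∃ M, ∀ x ∈ closure U, ‖k x‖ ≤ M :=
    hUc.exists_bound_of_continuousOn (hk.continuousOn.mono hUV)
  set C : ℝ := max M 0 with hC
  have hCnn : 0 ≤ C := le_max_right _ _
  have hkC : ∀ x ∈ closure U, ‖k x‖ ≤ C := fun x hx => (hM x hx).trans (le_max_left _ _)
  -- the family is equicontinuous
  have heq : Equicontinuous (fun (g : S) => ((g : C(U, B)) : ↥U → B)) := by
    intro x₀
    rw [Metric.equicontinuousAt_iff]
    intro ε hε
    -- radius around x₀ inside V
    obtain ⟨r, hr, hrV⟩ := Metric.isOpen_iff.1 hV x₀.1 (hUsubV x₀.2)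
    -- continuity of k at x₀
    have hkx₀ : ContinuousAt k x₀.1 :=
      hk.continuousOn.continuousAt (hV.mem_nhds (hUsubV x₀.2))
    obtain ⟨δ₁, hδ₁, hδ₁'⟩ := Metric.continuousAt_iff.1 hkx₀ (ε / 2) (by linarith)
    refine ⟨min (min r δ₁) (ε * r / (6 * (C + 1))), ?_, ?_⟩
    · have : 0 < ε * r / (6 * (C + 1)) := by positivity
      exact lt_min (lt_min hr hδ₁) this
    · rintro x hx ⟨g, f, hf, hfb, hgf⟩
      have hd : dist x x₀ = ‖x.1 - x₀.1‖ := by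
        rw [Subtype.dist_eq, dist_eq_norm]
      have hdr : dist x x₀ < r := lt_of_lt_of_le hx ((min_le_left _ _).trans (min_le_left _ _))
      have hdδ₁ : dist x x₀ < δ₁ := lt_of_lt_of_le hx ((min_le_left _ _).trans (min_le_right _ _))
      have hdε : dist x x₀ < ε * r / (6 * (C + 1)) := lt_of_lt_of_le hx (min_le_right _ _)
      have hxball : x.1 ∈ ball x₀.1 r := by
        rw [mem_ball, ← Subtype.dist_eq]; exact hdr
      -- Lipschitz bound on f
      have hflip : ‖f x.1 - f x₀.1‖ ≤ 3 / r * ‖x.1 - x₀.1‖ :=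
        schwarz_lip hf hfb hr hrV hxball
      -- bound on k difference
      have hkdiff : ‖k x.1 - k x₀.1‖ < ε / 2 := by
        have := hδ₁' (by rwa [Subtype.dist_eq] at hdδ₁)
        rwa [dist_eq_norm] at this
      have hxV : x.1 ∈ V := hUsubV x.2
      have hfx₀1 : ‖f x₀.1‖ ≤ 1 := hfb _ (hUsubV x₀.2)
      rw [dist_comm]
      calc dist (g x) (g x₀) = ‖k x.1 (f x.1) - k x₀.1 (f x₀.1)‖ := by
            rw [hgf x, hgf x₀, dist_eq_norm]
        _ = ‖k x.1 (f x.1 - f x₀.1) + (k x.1 - k x₀.1) (f x₀.1)‖ := by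
            congr 1
            simp only [map_sub, ContinuousLinearMap.sub_apply]
            abel
        _ ≤ ‖k x.1 (f x.1 - f x₀.1)‖ + ‖(k x.1 - k x₀.1) (f x₀.1)‖ := norm_add_le _ _
        _ ≤ ‖k x.1‖ * ‖f x.1 - f x₀.1‖ + ‖k x.1 - k x₀.1‖ * ‖f x₀.1‖ := by
            gcongr <;> exact ContinuousLinearMap.le_opNorm _ _
        _ ≤ C * (3 / r * ‖x.1 - x₀.1‖) + ε / 2 * 1 := by
            gcongr
            exact hkC _ (subset_closure x.2)
        _ < ε := by
            have hx1 : ‖x.1 - x₀.1‖ < ε * r / (6 * (C + 1)) := by rwa [hd] at hdε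
            have hx1nn : 0 ≤ ‖x.1 - x₀.1‖ := norm_nonneg _
            have h1 : C * (3 / r * ‖x.1 - x₀.1‖) ≤ (C + 1) * (3 / r) * ‖x.1 - x₀.1‖ := by
              rw [mul_assoc]
              gcongr
              linarith
            have h2 : (C + 1) * (3 / r) * ‖x.1 - x₀.1‖ < (C + 1) * (3 / r) * (ε * r / (6 * (C + 1))) := by
              apply mul_lt_mul_of_pos_left hx1
              positivity
            have h3 : (C + 1) * (3 / r) * (ε * r / (6 * (C + 1))) = ε / 2 := by
              field_simp
              ring
            nlinarith [h1, h2, h3]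
  -- apply Arzelà–Ascoli
  apply ArzelaAscoli.isCompact_closure_of_isClosedEmbedding
    (𝔖 := {K : Set ↥U | IsCompact K}) (F := fun (g : C(U, B)) => (g : ↥U → B))
    (fun K hK => hK)
  · -- closed embedding
    exact { toIsEmbedding := ContinuousMap.isUniformEmbedding_toUniformOnFunIsCompact.isEmbedding
            isClosed_range := by
              rw [show Set.range (UniformOnFun.ofFun {K : Set ↥U | IsCompact K} ∘
                    fun (g : C(U, B)) => (g : ↥U → B)) =
                  Set.range (ContinuousMap.toUniformOnFunIsCompact) from rfl,
                ContinuousMap.range_toUniformOnFunIsCompact]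
              exact UniformOnFun.isClosed_setOf_continuous
                CompactlyCoherentSpace.isCoherentWith }
  · -- equicontinuity on compacts
    exact fun K hK => heq.equicontinuousOn K
  · -- pointwise compactness
    rintro K hK x hx
    have hxV : x.1 ∈ V := hUsubV x.2
    refine ⟨closure ((k x.1) '' closedBall 0 1), ?_, ?_⟩
    · exact (hkc x.1 hxV).isCompact_closure_image_closedBall (𝕜₁ := ℂ) 1
    · rintro g ⟨f, hf, hfb, hgf⟩
      refine subset_closure ⟨f x.1, ?_, (hgf x).symm⟩
      simpa [mem_closedBall, dist_zero_right] using hfb _ hxV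
end

section
/- Let X be a Fréchet space, C a Fréchet space, δ : C → X continuous linear, and suppose there is a finite dimensional subspace K ⊆ X with X = K + δ(C). Then δ(C) is closed in X and X/δ(C) is finite dimensional of dimension at most dim K. -/
open Filter Topology Set Bornology Pointwise

section OMT

variable {E X : Type*}
  [AddCommGroup E] [Module ℝ E] [UniformSpace E] [IsUniformAddGroup E]
  [ContinuousSMul ℝ E] [LocallyConvexSpace ℝ E]
  [AddCommGroup X] [Module ℝ X] [UniformSpace X] [IsUniformAddGroup X]
  [ContinuousSMul ℝ X]

theorem omt_closure_mem_nhds [BaireSpace X] [T2Space X] (f : E →L[ℝ] X)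
    (hf : Function.Surjective f) {U : Set E} (hU : U ∈ 𝓝 (0 : E)) :
    closure (f '' U) ∈ 𝓝 (0 : X) := by
  obtain ⟨W, ⟨hWmem, hWconv⟩, hWU⟩ := (LocallyConvexSpace.convex_basis_zero ℝ E).mem_iff.1 hU
  have hnegW : -W ∈ 𝓝 (0 : E) := by
    have : (fun e : E => -e) ⁻¹' W ∈ 𝓝 (0 : E) :=
      (continuous_neg.continuousAt (x := (0 : E))).preimage_mem_nhds (by simpa using hWmem)
    exact this
  set W' : Set E := W ∩ -W with hW'def
  have hW'mem : W' ∈ 𝓝 (0 : E) := inter_mem hWmem hnegW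
  have hW'conv : Convex ℝ W' := hWconv.inter hWconv.neg
  have hW'symm : ∀ x ∈ W', -x ∈ W' := by
    rintro x ⟨h1, h2⟩
    exact ⟨h2, by simpa using h1⟩
  set s : Set X := closure (f '' W') with hsdef
  have hsconv : Convex ℝ s := by
    have := (hW'conv.linear_image (f : E →ₗ[ℝ] X))
    simpa [hsdef] using this.closure
  have hs_symm : ∀ y ∈ s, -y ∈ s := by
    have himg : ∀ y ∈ f '' W', -y ∈ f '' W' := by
      rintro _ ⟨w, hw, rfl⟩
      exact ⟨-w, hW'symm w hw, map_neg f w⟩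
    intro y hy
    have : -(f '' W') = f '' W' := by
      ext z
      constructor
      · intro hz
        simpa using himg _ (Set.mem_neg.1 hz)
      · intro hz
        exact Set.mem_neg.2 (by simpa using himg _ hz)
    rw [hsdef, ← this, ← neg_closure]
    simpa using hy
  have hcover : ⋃ n : ℕ, (((n : ℝ) + 1) • s) = univ := by
    refine eq_univ_iff_forall.2 fun x => mem_iUnion.2 ?_
    obtain ⟨e, rfl⟩ := hf x
    have habs : Absorbs ℝ W' {e} := (absorbent_nhds_zero hW'mem) e
    have htend : Tendsto (fun n : ℕ => ((n : ℝ) + 1)) atTop (cobounded ℝ) := by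
      rw [← tendsto_norm_atTop_iff_cobounded]
      have h1 : Tendsto (fun n : ℕ => ((n : ℝ) + 1)) atTop atTop :=
        tendsto_atTop_add_const_right _ 1 tendsto_natCast_atTop_atTop
      refine h1.congr fun n => ?_
      rw [Real.norm_of_nonneg (by positivity)]
    obtain ⟨n, hn⟩ := (htend.eventually habs.eventually).exists
    obtain ⟨w, hw, hew⟩ := hn (mem_singleton e)
    refine ⟨n, ?_⟩
    rw [← hew, map_smul]
    exact smul_mem_smul_set (subset_closure ⟨w, hw, rfl⟩)
  obtain ⟨n, z, hz⟩ := nonempty_interior_of_iUnion_of_closed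
    (fun n : ℕ => IsClosed.smul₀ ((n : ℝ) + 1) isClosed_closure) hcover
  have hne : ((n : ℝ) + 1) ≠ 0 := by positivity
  rw [interior_smul₀ hne] at hz
  obtain ⟨z', hz', rfl⟩ := hz
  have hz's : z' ∈ s := interior_subset hz'
  have h0 : (0 : X) ∈ interior s := by
    have hsub := hsconv.combo_interior_self_subset_interior
      (a := (1:ℝ)/2) (b := (1:ℝ)/2) (by norm_num) (by norm_num) (by norm_num)
    have : ((1:ℝ)/2) • z' + ((1:ℝ)/2) • (-z') = 0 := by
      rw [smul_neg]; abel
    rw [← this]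
    exact hsub (Set.add_mem_add (smul_mem_smul_set hz') (smul_mem_smul_set (hs_symm z' hz's)))
  have hsub2 : s ⊆ closure (f '' U) :=
    closure_mono (Set.image_mono (fun a ha => hWU ha.1))
  exact mem_of_superset (mem_interior_iff_mem_nhds.1 h0) hsub2

end OMT

section OMT2

variable {E X : Type*}
  [AddCommGroup E] [Module ℝ E] [UniformSpace E] [IsUniformAddGroup E]
  [ContinuousSMul ℝ E] [LocallyConvexSpace ℝ E]
  [AddCommGroup X] [Module ℝ X] [UniformSpace X] [IsUniformAddGroup X]
  [ContinuousSMul ℝ X]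

theorem omt_isOpenMap [BaireSpace X] [T2Space X] [CompleteSpace E]
    [FirstCountableTopology E] [FirstCountableTopology X]
    (f : E →L[ℝ] X) (hf : Function.Surjective f) : IsOpenMap f := by
  have step2 : ∀ V ∈ 𝓝 (0 : E), f '' V ∈ 𝓝 (0 : X) := by
    intro V hV
    obtain ⟨B', hB'⟩ := (𝓝 (0 : E)).exists_antitone_basis
    obtain ⟨B, hB⟩ := (𝓝 (0 : X)).exists_antitone_basis
    have hstep : ∀ S : Set E, S ∈ 𝓝 (0 : E) → ∀ n : ℕ,
        ∃ T, T ∈ 𝓝 (0 : E) ∧ (∀ a ∈ T, ∀ b ∈ T, a + b ∈ S) ∧ T ⊆ B' n := by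
      intro S hS n
      obtain ⟨T₀, hT₀, hT₀S⟩ := exists_nhds_zero_half hS
      exact ⟨T₀ ∩ B' n, inter_mem hT₀ (hB'.1.mem_of_mem trivial),
        fun a ha b hb => hT₀S a ha.1 b hb.1, fun a ha => ha.2⟩
    choose T hT1 hT2 hT3 using hstep
    let U : ℕ → {S : Set E // S ∈ 𝓝 (0 : E)} := fun n =>
      Nat.rec ⟨T V hV 0, hT1 V hV 0⟩ (fun n p => ⟨T p.1 p.2 (n+1), hT1 p.1 p.2 (n+1)⟩) n
    have hUsucc : ∀ n : ℕ, (U (n+1)).1 = T (U n).1 (U n).2 (n+1) := fun n => rfl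
    have hUadd : ∀ n, ∀ a ∈ (U (n+1)).1, ∀ b ∈ (U (n+1)).1, a + b ∈ (U n).1 := by
      intro n; rw [hUsucc]; exact hT2 (U n).1 (U n).2 (n+1)
    have hUB' : ∀ n, (U (n+1)).1 ⊆ B' (n+1) := by
      intro n; rw [hUsucc]; exact hT3 (U n).1 (U n).2 (n+1)
    have hUV : ∀ a ∈ (U 0).1, ∀ b ∈ (U 0).1, a + b ∈ V := hT2 V hV 0
    have hU0 : ∀ n, (0 : E) ∈ (U n).1 := fun n => mem_of_mem_nhds (U n).2
    have hUmono : ∀ n, (U (n+1)).1 ⊆ (U n).1 := fun n a ha => by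
      simpa using hUadd n a ha 0 (hU0 (n+1))
    have key : ∀ n : ℕ, ∀ y ∈ closure (f '' (U (n+1)).1), ∃ u, u ∈ (U (n+1)).1 ∧
        y - f u ∈ closure (f '' (U (n+2)).1) ∩ B n := by
      intro n y hy
      have hN : closure (f '' (U (n+2)).1) ∩ B n ∈ 𝓝 (0 : X) :=
        inter_mem (omt_closure_mem_nhds f hf (U (n+2)).2) (hB.1.mem_of_mem trivial)
      have hS : {w : X | y - w ∈ closure (f '' (U (n+2)).1) ∩ B n} ∈ 𝓝 y := by
        have hc : ContinuousAt (fun w : X => y - w) y :=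
          (continuous_const.sub continuous_id).continuousAt
        exact hc.preimage_mem_nhds (by simpa using hN)
      obtain ⟨w, hwt, hws⟩ := mem_closure_iff_nhds.1 hy _ hS
      obtain ⟨u, hu, rfl⟩ := hws
      exact ⟨u, hu, hwt⟩
    choose uu huu1 huu2 using key
    have main : closure (f '' (U 1).1) ⊆ f '' V := by
      intro x hx
      let R : ∀ n : ℕ, {y : X // y ∈ closure (f '' (U (n+1)).1)} := fun n =>
        Nat.rec ⟨x, hx⟩ (fun n p => ⟨p.1 - f (uu n p.1 p.2), (huu2 n p.1 p.2).1⟩) n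
      let u : ℕ → E := fun n => uu n (R n).1 (R n).2
      have hR_succ : ∀ n, (R (n+1)).1 = (R n).1 - f (u n) := fun n => rfl
      have hu_mem : ∀ n, u n ∈ (U (n+1)).1 := fun n => huu1 n (R n).1 (R n).2
      have hR_B : ∀ n, (R (n+1)).1 ∈ B n := fun n => (huu2 n (R n).1 (R n).2).2
      let s : ℕ → E := fun n => ∑ k ∈ Finset.range n, u k
      have hsum : ∀ m k : ℕ, (∑ j ∈ Finset.Ico k (k + m), u j) ∈ (U k).1 := by
        intro m
        induction m with
        | zero => intro k; simpa using hU0 k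
        | succ m ih =>
          intro k
          rw [Finset.sum_eq_sum_Ico_succ_bot (by omega)]
          have h2 : (∑ j ∈ Finset.Ico (k+1) (k + (m+1)), u j) ∈ (U (k+1)).1 := by
            have := ih (k+1)
            rwa [show k+1+m = k+(m+1) by omega] at this
          exact hUadd k _ (hu_mem k) _ h2
      have hdiff : ∀ {k l : ℕ}, k ≤ l → s l - s k ∈ (U k).1 := by
        intro k l hkl
        have := hsum (l - k) k
        rwa [show k + (l - k) = l by omega, Finset.sum_Ico_eq_sub _ hkl] at this
      have hcauchy : CauchySeq s := by
        rw [cauchySeq_iff]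
        intro Vu hVu
        rw [uniformity_eq_comap_nhds_zero E] at hVu
        obtain ⟨W, hW, hWV⟩ := Filter.mem_comap.1 hVu
        obtain ⟨W₂, hW₂, hW₂W⟩ := exists_nhds_zero_half hW
        have hW₃ : W₂ ∩ (fun e : E => -e) ⁻¹' W₂ ∈ 𝓝 (0 : E) :=
          inter_mem hW₂
            ((continuous_neg.continuousAt (x := (0:E))).preimage_mem_nhds (by simpa using hW₂))
        obtain ⟨i, -, hi⟩ := hB'.1.mem_iff.1 hW₃
        refine ⟨i + 1, fun k hk l hl => ?_⟩
        apply hWV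
        have hsub : (U (i+1)).1 ⊆ W₂ ∩ (fun e : E => -e) ⁻¹' W₂ := fun a ha =>
          hi (hB'.2 (Nat.le_succ i) (hUB' i ha))
        have h1 := hsub (hdiff hk)
        have h2 := hsub (hdiff hl)
        have h3 : (s l - s (i+1)) + (-(s k - s (i+1))) ∈ W := hW₂W _ h2.1 _ h1.2
        simp only [Set.mem_preimage]
        convert h3 using 1
        abel
      obtain ⟨e, he⟩ := cauchySeq_tendsto_of_complete hcauchy
      have hRtend : Tendsto (fun n => (R n).1) atTop (𝓝 (0 : X)) := by
        rw [hB.1.tendsto_right_iff]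
        intro i _
        filter_upwards [eventually_ge_atTop (i+1)] with n hn
        obtain ⟨m, rfl⟩ : ∃ m, n = m + 1 := ⟨n - 1, by omega⟩
        exact hB.2 (by omega) (hR_B m)
      have hfs : ∀ n, f (s n) = x - (R n).1 := by
        intro n
        induction n with
        | zero => simp [s, R]
        | succ n ih =>
          have hs1 : s (n+1) = s n + u n := Finset.sum_range_succ u n
          rw [hs1, map_add, ih, hR_succ n]
          abel
      have hfse : Tendsto (fun n => f (s n)) atTop (𝓝 x) := by
        simp only [hfs]
        simpa using tendsto_const_nhds (x := x) (f := atTop (α := ℕ)) |>.sub hRtend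
      have hfe : Tendsto (fun n => f (s n)) atTop (𝓝 (f e)) := (f.continuous.tendsto e).comp he
      have hxe : f e = x := tendsto_nhds_unique hfe hfse
      have hesn : Tendsto (fun n => e - s n) atTop (𝓝 (0 : E)) := by
        simpa using tendsto_const_nhds (x := e) (f := atTop (α := ℕ)) |>.sub he
      have hev : ∀ᶠ n in atTop, e - s n ∈ (U 1).1 := hesn.eventually_mem (U 1).2
      obtain ⟨n, hn⟩ := hev.exists
      have h2 : s n ∈ (U 0).1 := by
        have := hsum n 0
        simpa using this
      have he' : e = (e - s n) + s n := by abel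
      exact ⟨e, he' ▸ hUV _ (hUmono 0 hn) _ h2, hxe⟩
    exact mem_of_superset (omt_closure_mem_nhds f hf (U 1).2) main
  intro A hA
  rw [isOpen_iff_mem_nhds]
  rintro _ ⟨a, ha, rfl⟩
  have hA0 : (fun e : E => e + a) ⁻¹' A ∈ 𝓝 (0 : E) := by
    apply (continuous_id.add continuous_const).continuousAt.preimage_mem_nhds
    simpa using hA.mem_nhds ha
  have h1 := step2 _ hA0
  have himg : (fun y : X => y + f a) '' (f '' ((fun e : E => e + a) ⁻¹' A)) ⊆ f '' A := by
    rintro _ ⟨_, ⟨e, he, rfl⟩, rfl⟩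
    exact ⟨e + a, he, by rw [map_add]⟩
  have h2 : (fun y : X => y + f a) '' (f '' ((fun e : E => e + a) ⁻¹' A)) ∈ 𝓝 (f a) := by
    have := (Homeomorph.addRight (f a)).isOpenMap.image_mem_nhds h1
    simpa using this
  exact mem_of_superset h2 himg

end OMT2



/-- if `δ : C → X` is a continuous linear map of Fréchet spaces and `K ⊆ X` is a
finite dimensional subspace with `X = K + δ(C)`, then `δ(C)` is closed and `X/δ(C)` is finite
dimensional, of dimension at most `dim K`. -/
theorem closed_finite_codim_of_finite_dim_complement
    {C : Type*} [AddCommGroup C] [Module ℝ C] [UniformSpace C] [IsUniformAddGroup C]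
    [ContinuousSMul ℝ C] [LocallyConvexSpace ℝ C] [CompleteSpace C]
    [TopologicalSpace.MetrizableSpace C]
    {X : Type*} [AddCommGroup X] [Module ℝ X] [UniformSpace X] [IsUniformAddGroup X]
    [ContinuousSMul ℝ X] [LocallyConvexSpace ℝ X] [CompleteSpace X]
    [TopologicalSpace.MetrizableSpace X]
    (δ : C →L[ℝ] X) (K : Submodule ℝ X) (hK : FiniteDimensional ℝ K)
    (hX : ∀ x : X, ∃ k ∈ K, ∃ c : C, x = k + δ c) :
    IsClosed (Set.range δ : Set X) ∧
      FiniteDimensional ℝ (X ⧸ LinearMap.range (δ : C →ₗ[ℝ] X)) ∧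
      Module.finrank ℝ (X ⧸ LinearMap.range (δ : C →ₗ[ℝ] X)) ≤ Module.finrank ℝ K := by
  classical
  haveI := hK
  set M : Submodule ℝ X := LinearMap.range (δ : C →ₗ[ℝ] X) with hMdef
  have hδM : ∀ c : C, δ c ∈ M := fun c => ⟨c, rfl⟩
  -- algebraic part
  have hsurjQ : Function.Surjective (M.mkQ.comp K.subtype) := by
    intro q
    obtain ⟨x, rfl⟩ := M.mkQ_surjective q
    obtain ⟨k, hk, c, hc⟩ := hX x
    refine ⟨⟨k, hk⟩, ?_⟩
    simp only [LinearMap.comp_apply, Submodule.subtype_apply, Submodule.mkQ_apply]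
    rw [Submodule.Quotient.eq]
    rw [hc]
    simpa using M.neg_mem (hδM c)
  haveI hfd : FiniteDimensional ℝ (X ⧸ M) := Module.Finite.of_surjective _ hsurjQ
  have hrank : Module.finrank ℝ (X ⧸ M) ≤ Module.finrank ℝ K := by
    calc Module.finrank ℝ (X ⧸ M)
        = Module.finrank ℝ (⊤ : Submodule ℝ (X ⧸ M)) := (finrank_top _ _).symm
      _ = Module.finrank ℝ (LinearMap.range (M.mkQ.comp K.subtype)) := by
          rw [LinearMap.range_eq_top.2 hsurjQ]
      _ ≤ Module.finrank ℝ K := LinearMap.finrank_range_le _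
  -- complement F inside K
  obtain ⟨F', hF'⟩ := Submodule.exists_isCompl (M.comap K.subtype)
  set F : Submodule ℝ X := F'.map K.subtype with hFdef
  haveI : FiniteDimensional ℝ F := Module.Finite.map _ _
  have hFM_bot : ∀ x : X, x ∈ F → x ∈ M → x = 0 := by
    intro x hxF hxM
    obtain ⟨⟨k, hk⟩, hkF', rfl⟩ := hxF
    have hmem : (⟨k, hk⟩ : K) ∈ M.comap K.subtype ⊓ F' := ⟨hxM, hkF'⟩
    rw [hF'.inf_eq_bot] at hmem
    rw [Submodule.mem_bot] at hmem
    simp [hmem]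
  have hFM_top : ∀ x : X, ∃ g ∈ F, ∃ m ∈ M, x = g + m := by
    intro x
    obtain ⟨k, hk, c, hc⟩ := hX x
    have hmem : (⟨k, hk⟩ : K) ∈ F' ⊔ M.comap K.subtype := by
      rw [sup_comm, hF'.sup_eq_top]; trivial
    obtain ⟨g, hg, m, hm, hgm⟩ := Submodule.mem_sup.1 hmem
    refine ⟨(g : X), Submodule.mem_map_of_mem hg, (m : X) + δ c, M.add_mem hm (hδM c), ?_⟩
    have : (g : X) + (m : X) = k := by
      rw [← Submodule.coe_add, hgm]
    rw [hc, ← this]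
    abel
  -- parametrize F by ℝ^n
  set n := Module.finrank ℝ F with hn
  let b := Module.finBasis ℝ F
  let φ₀ : (Fin n → ℝ) ≃ₗ[ℝ] F := b.equivFun.symm
  let φ : (Fin n → ℝ) →ₗ[ℝ] X := F.subtype ∘ₗ (φ₀ : (Fin n → ℝ) →ₗ[ℝ] F)
  haveI : T2Space X := inferInstance
  have hφcont : Continuous φ := φ.continuous_of_finiteDimensional
  have hφmem : ∀ y, φ y ∈ F := fun y => (φ₀ y).2
  have hφrange : ∀ g ∈ F, ∃ y, φ y = g := by
    intro g hg
    refine ⟨φ₀.symm ⟨g, hg⟩, ?_⟩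
    simp [φ]
  have hφinj : ∀ y, φ y ∈ M → y = 0 := by
    intro y hy
    have h0 : φ y = 0 := hFM_bot _ (hφmem y) hy
    have h1 : φ₀ y = 0 := Subtype.ext (by simpa [φ] using h0)
    have := congrArg φ₀.symm h1
    simpa using this
  let T : (C × (Fin n → ℝ)) →L[ℝ] X :=
    δ.comp (ContinuousLinearMap.fst ℝ C (Fin n → ℝ)) +
      (⟨φ, hφcont⟩ : (Fin n → ℝ) →L[ℝ] X).comp (ContinuousLinearMap.snd ℝ C (Fin n → ℝ))
  have hT : ∀ p : C × (Fin n → ℝ), T p = δ p.1 + φ p.2 := fun p => rfl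
  have hTsurj : Function.Surjective T := by
    intro x
    obtain ⟨g, hg, m, hm, rfl⟩ := hFM_top x
    obtain ⟨c, hc⟩ := hm
    obtain ⟨y, hy⟩ := hφrange g hg
    refine ⟨(c, y), ?_⟩
    rw [hT]
    show (δ : C →ₗ[ℝ] X) c + φ y = g + m
    rw [hc, hy]
    abel
  -- instances
  haveI : FirstCountableTopology X := inferInstance
  haveI : FirstCountableTopology C := inferInstance
  haveI : BaireSpace X := by
    haveI : (uniformity X).IsCountablyGenerated := IsUniformAddGroup.uniformity_countably_generated
    letI := UniformSpace.pseudoMetricSpace X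
    infer_instance
  have hTopen : IsOpenMap T := omt_isOpenMap T hTsurj
  have hpre : T ⁻¹' (M : Set X) = {p : C × (Fin n → ℝ) | p.2 = 0} := by
    ext p
    simp only [Set.mem_preimage, SetLike.mem_coe, Set.mem_setOf_eq, hT]
    constructor
    · intro h
      have hφM : φ p.2 ∈ M := by
        have := M.sub_mem h (hδM p.1)
        simpa using this
      exact hφinj _ hφM
    · intro h
      rw [h]
      simpa using hδM p.1
  have hMclosed : IsClosed (M : Set X) := by
    rw [← isOpen_compl_iff]
    have himg : (M : Set X)ᶜ = T '' (T ⁻¹' (M : Set X)ᶜ) := (Set.image_preimage_eq _ hTsurj).symm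
    rw [himg]
    apply hTopen
    have hpc : ⇑T ⁻¹' (↑M)ᶜ = {p : C × (Fin n → ℝ) | p.2 = 0}ᶜ := by
      rw [Set.preimage_compl, hpre]
    rw [hpc]
    exact (isClosed_eq continuous_snd continuous_const).isOpen_compl
  refine ⟨?_, hfd, hrank⟩
  have hrangeδ : Set.range ⇑δ = (M : Set X) := by
    ext x
    simp only [Set.mem_range, SetLike.mem_coe, hMdef, LinearMap.mem_range,
      ContinuousLinearMap.coe_coe]
  rw [hrangeδ]
  exact hMclosed
end
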